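/- arXiv:1204.0305 — 5 statements merged into one kernel-verified Lean document; each statement's English description precedes it below -/
import Mathlib

section
/- Let ε > 0 and A, B : [-ε, ε] → ℝ continuous with A(0) > 0. If h : (0, ε] → ℝ solves h'(y) = -h(y)/(A(y)y²) + B(y) and lim_{y→0+} h(y) = c for some real c ≠ 0, then a contradiction follows; i.e., every solution on (0,ε] with a finite limit at 0 must have limit 0. -/
/-!
Near `0⁺` we have `A ≈ A 0 > 0`, `B` bounded and `h ≈ c`; if `c > 0` this gives
`h' ≤ M - K / y²` with `K = c / (4 A 0) > 0`, so `h - (M y + K / y)` is antitone and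
`h ≥ K / y + O(1)` blows up as `y → 0⁺`, contradicting `h → c`. The case `c < 0` follows by
applying this to `-h`, which solves the same equation with `-B` in place of `B`.
-/

open Filter Topology Set

lemma tendsto_atTop_of_hasDerivAt_le_sub_div_sq {f f' : ℝ → ℝ} {K M : ℝ} (hK : 0 < K)
    (hf : ∀ᶠ y in 𝓝[>] 0, HasDerivAt f (f' y) y)
    (hf' : ∀ᶠ y in 𝓝[>] 0, f' y ≤ M - K / y ^ 2) :
    Tendsto f (𝓝[>] 0) atTop := by
  obtain ⟨δ, hδ, hsub⟩ := mem_nhdsGT_iff_exists_Ioc_subset.mp (hf.and hf')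
  have hδ : (0 : ℝ) < δ := hδ
  set g : ℝ → ℝ := fun y ↦ f y - (M * y + K * y⁻¹)
  have hg : ∀ y ∈ Ioc 0 δ, HasDerivAt g (f' y - (M - K / y ^ 2)) y := by
    intro y hy
    have hM : HasDerivAt (fun y : ℝ ↦ M * y) M y := by
      simpa using (hasDerivAt_id y).const_mul M
    have hK : HasDerivAt (fun y : ℝ ↦ K * y⁻¹) (K * -(y ^ 2)⁻¹) y :=
      (hasDerivAt_inv hy.1.ne').const_mul K
    exact ((hsub hy).1.sub (hM.add hK)).congr_deriv (by ring)
  have hg_anti : AntitoneOn g (Ioc 0 δ) := by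
    have hint : interior (Ioc 0 δ) ⊆ Ioc 0 δ := interior_subset
    refine antitoneOn_of_hasDerivWithinAt_nonpos (convex_Ioc 0 δ)
      (fun y hy ↦ (hg y hy).continuousAt.continuousWithinAt)
      (fun y hy ↦ (hg y (hint hy)).hasDerivWithinAt) fun y hy ↦ ?_
    linarith [(hsub (hint hy)).2]
  have hlower : ∀ y ∈ Ioc 0 δ, g δ + M * y + K * y⁻¹ ≤ f y := by
    intro y hy
    have := hg_anti hy ⟨hδ, le_rfl⟩ hy.2
    linarith
  have hblowup : Tendsto (fun y : ℝ ↦ g δ + M * y + K * y⁻¹) (𝓝[>] 0) atTop := by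
    refine Tendsto.add_atTop (C := g δ + M * 0) ?_ (tendsto_inv_nhdsGT_zero.const_mul_atTop hK)
    exact ((continuous_const.add (continuous_const.mul continuous_id)).tendsto 0).mono_left
      nhdsWithin_le_nhds
  exact tendsto_atTop_mono' _ (eventually_of_mem (Ioc_mem_nhdsGT hδ) hlower) hblowup

lemma not_tendsto_of_hasDerivAt_neg_div_add_of_pos {A B h : ℝ → ℝ} {a c M : ℝ}
    (ha : 0 < a) (hc : 0 < c) (hA : Tendsto A (𝓝[>] 0) (𝓝 a))
    (hB : ∀ᶠ y in 𝓝[>] 0, B y ≤ M)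
    (hode : ∀ᶠ y in 𝓝[>] 0, HasDerivAt h (-(h y) / (A y * y ^ 2) + B y) y) :
    ¬ Tendsto h (𝓝[>] 0) (𝓝 c) := by
  intro hlim
  have hA_pos : ∀ᶠ y in 𝓝[>] 0, A y ∈ Ioo 0 (2 * a) :=
    hA (Ioo_mem_nhds ha (by linarith))
  have hh_pos : ∀ᶠ y in 𝓝[>] 0, c / 2 < h y := hlim (lt_mem_nhds (by linarith))
  have hderiv : ∀ᶠ y in 𝓝[>] 0, -(h y) / (A y * y ^ 2) + B y ≤ M - c / (4 * a) / y ^ 2 := by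
    filter_upwards [hA_pos, hh_pos, hB, self_mem_nhdsWithin] with y ⟨hA0, hA2⟩ hhy hBy hy
    have hy2 : 0 < y ^ 2 := pow_pos hy 2
    have hkey : c / (4 * a) / y ^ 2 ≤ h y / (A y * y ^ 2) := by
      rw [div_div, div_le_div_iff₀ (by positivity) (by positivity)]
      nlinarith [mul_lt_mul_of_pos_right hA2 (mul_pos hc hy2),
        mul_lt_mul_of_pos_right hhy (mul_pos ha hy2)]
    rw [neg_div]
    linarith
  exact not_tendsto_nhds_of_tendsto_atTop
    (tendsto_atTop_of_hasDerivAt_le_sub_div_sq (by positivity) hode hderiv) c hlim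

/-- No solution `h` of `h'(y) = -h(y)/(A(y)y²) + B(y)` on `(0, ε]` can converge, as `y → 0+`,
to a nonzero finite limit `c`. -/
theorem stmt4 (ε : ℝ) (hε : 0 < ε) (A B : ℝ → ℝ)
    (hA : ContinuousOn A (Set.Icc (-ε) ε)) (hB : ContinuousOn B (Set.Icc (-ε) ε))
    (hA0 : 0 < A 0) (h : ℝ → ℝ)
    (hode : ∀ y ∈ Set.Ioc 0 ε, HasDerivAt h (-(h y) / (A y * y ^ 2) + B y) y)
    (c : ℝ) (hc : c ≠ 0)
    (hlim : Tendsto h (nhdsWithin 0 (Set.Ioi 0)) (nhds c)) :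
    False := by
  have hIcc : Icc (-ε) ε ∈ 𝓝 (0 : ℝ) := Icc_mem_nhds (by linarith) hε
  have hA' : Tendsto A (𝓝[>] 0) (𝓝 (A 0)) :=
    (hA.continuousAt hIcc).tendsto.mono_left nhdsWithin_le_nhds
  have hB' : Tendsto B (𝓝[>] 0) (𝓝 (B 0)) :=
    (hB.continuousAt hIcc).tendsto.mono_left nhdsWithin_le_nhds
  have hode' : ∀ᶠ y in 𝓝[>] 0, HasDerivAt h (-(h y) / (A y * y ^ 2) + B y) y :=
    eventually_of_mem (Ioc_mem_nhdsGT hε) hode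
  rcases hc.lt_or_gt with hneg | hpos
  · refine not_tendsto_of_hasDerivAt_neg_div_add_of_pos hA0 (neg_pos.2 hneg) hA'
      (hB'.neg.eventually (ge_mem_nhds (lt_add_one _))) ?_ hlim.neg
    filter_upwards [hode'] with y hy
    exact hy.neg.congr_deriv (by ring)
  · exact not_tendsto_of_hasDerivAt_neg_div_add_of_pos hA0 hpos hA'
      (hB'.eventually (ge_mem_nhds (lt_add_one _))) hode' hlim
end

section
/- Let ε > 0 and A, B : [-ε, 0] → ℝ continuous with A(0) > 0. Then every solution h of h'(y) = -h(y)/(A(y)y²) + B(y) on [-ε, 0) satisfies lim_{y→0-} h(y) = 0. -/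
/-!
Near `0⁻` we have `0 < A ≤ M` and `B ≤ C`, so wherever `h y ≥ r > 0` the equation gives
`h' y ≤ -r / (M y²) + C ≤ -r / (2 M y²)` once `y` is small. Hence `h` can never cross the level
`r` upwards, and it cannot stay above `r` all the way to `0` either, because `∫ dy / y²` diverges
there. So eventually `h ≤ r`; the same argument for `-h`, which solves the equation with `-B`,
gives `h ≥ -r`.
-/

open Filter Set Topology

section Barrier

variable {f f' : ℝ → ℝ} {a r c : ℝ}

theorem exists_le_of_deriv_le_neg_div_sq (ha : a < 0) (hc : 0 < c)
    (hf : ∀ y ∈ Ico a 0, HasDerivAt f (f' y) y)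
    (hbound : ∀ y ∈ Ico a 0, r ≤ f y → f' y ≤ -c / y ^ 2) :
    ∃ y ∈ Ico a 0, f y ≤ r := by
  by_contra! hgt
  -- `f - c / y` is antitone while `f > r`, and `c / y → -∞` as `y → 0⁻`.
  have hanti : AntitoneOn (fun y => f y - c * y⁻¹) (Ico a 0) := by
    have hderiv : ∀ y ∈ Ico a 0, HasDerivAt (fun y => f y - c * y⁻¹) (f' y + c / y ^ 2) y :=
      fun y hy => ((hf y hy).sub ((hasDerivAt_inv hy.2.ne).const_mul c)).congr_deriv (by ring)
    refine antitoneOn_of_hasDerivWithinAt_nonpos (convex_Ico a 0) (HasDerivAt.continuousOn hderiv)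
      (fun y hy => (hderiv y (interior_subset hy)).hasDerivWithinAt) fun y hy => ?_
    have := hbound y (interior_subset hy) (hgt y (interior_subset hy)).le
    rw [neg_div] at this
    linarith
  have hlim : Tendsto (fun y => c * y⁻¹) (𝓝[<] 0) atBot :=
    tendsto_inv_nhdsLT_zero.const_mul_atBot hc
  obtain ⟨y, hy, hsmall⟩ := (Eventually.and (Ico_mem_nhdsLT ha)
    (hlim.eventually (eventually_lt_atBot (r - f a + c * a⁻¹)))).exists
  have := hanti ⟨le_rfl, ha⟩ hy hy.1
  linarith [hgt y hy]

theorem eventually_le_of_deriv_le_neg_div_sq (hc : 0 < c)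
    (hf : ∀ᶠ y in 𝓝[<] 0, HasDerivAt f (f' y) y)
    (hbound : ∀ᶠ y in 𝓝[<] 0, r ≤ f y → f' y ≤ -c / y ^ 2) :
    ∀ᶠ y in 𝓝[<] 0, f y ≤ r := by
  obtain ⟨a, ha, hsub⟩ := mem_nhdsLT_iff_exists_Ico_subset.1 (hf.and hbound)
  obtain ⟨y₁, hy₁, hfy₁⟩ :=
    exists_le_of_deriv_le_neg_div_sq ha hc (fun y hy => (hsub hy).1) fun y hy => (hsub hy).2
  filter_upwards [Ioo_mem_nhdsLT hy₁.2] with y hy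
  have hIcc : Icc y₁ y ⊆ Ico a 0 := Icc_subset_Ico hy₁.1 hy.2
  refine image_le_of_deriv_right_lt_deriv_boundary (f' := f') (B' := 0)
    (HasDerivAt.continuousOn fun x hx => (hsub (hIcc hx)).1)
    (fun x hx => (hsub (hIcc (Ico_subset_Icc_self hx))).1.hasDerivWithinAt) hfy₁
    (fun _ => hasDerivAt_const _ r) (fun x hx hfx => ?_) ⟨hy.1.le, le_rfl⟩
  have hx := hIcc (Ico_subset_Icc_self hx)
  have hx2 : 0 < x ^ 2 := sq_pos_of_neg hx.2
  calc f' x ≤ -c / x ^ 2 := (hsub hx).2 hfx.ge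
    _ < 0 := div_neg_of_neg_of_pos (neg_neg_of_pos hc) hx2

end Barrier

theorem neg_div_mul_sq_add_le {a b M C r x y : ℝ} (hy : y ≠ 0) (ha : 0 < a) (haM : a ≤ M)
    (hbC : b ≤ C) (hr : 0 < r) (hrx : r ≤ x) (hsmall : 2 * M * C * y ^ 2 ≤ r) :
    -x / (a * y ^ 2) + b ≤ -(r / (2 * M)) / y ^ 2 := by
  have hy2 : 0 < y ^ 2 := by positivity
  have hM : 0 < M := ha.trans_le haM
  have hx : r / (M * y ^ 2) ≤ x / (a * y ^ 2) :=
    div_le_div₀ (hr.le.trans hrx) hrx (by positivity) (by gcongr)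
  have hC : C ≤ r / (2 * M * y ^ 2) := by
    rw [le_div_iff₀ (by positivity)]
    linarith
  have hsplit : -(r / (2 * M)) / y ^ 2 = -(r / (M * y ^ 2)) + r / (2 * M * y ^ 2) := by
    field_simp
    ring
  rw [neg_div, hsplit]
  linarith

theorem eventually_le_of_hasDerivAt_neg_div_mul_sq_add {A B h : ℝ → ℝ} {M C r : ℝ}
    (hM : 0 < M) (hr : 0 < r) (hA : ∀ᶠ y in 𝓝[<] 0, 0 < A y ∧ A y ≤ M)
    (hB : ∀ᶠ y in 𝓝[<] 0, B y ≤ C)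
    (hode : ∀ᶠ y in 𝓝[<] 0, HasDerivAt h (-(h y) / (A y * y ^ 2) + B y) y) :
    ∀ᶠ y in 𝓝[<] 0, h y ≤ r := by
  have hsmall : ∀ᶠ y in 𝓝[<] 0, 2 * M * C * y ^ 2 ≤ r := by
    have hlim : Tendsto (fun y : ℝ => 2 * M * C * y ^ 2) (𝓝[<] 0) (𝓝 0) :=
      ((by fun_prop : Continuous fun y : ℝ => 2 * M * C * y ^ 2).tendsto' 0 0
        (by simp)).mono_left nhdsWithin_le_nhds
    exact hlim.eventually (eventually_le_nhds hr)
  refine eventually_le_of_deriv_le_neg_div_sq (c := r / (2 * M)) (by positivity) hode ?_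
  filter_upwards [hA, hB, hsmall, self_mem_nhdsWithin] with y hAy hBy hy hy0
  exact fun hry => neg_div_mul_sq_add_le (ne_of_lt hy0) hAy.1 hAy.2 hBy hr hry hy

/-- Every solution of `h'(y) = -h(y)/(A(y)y²) + B(y)` on `[-ε, 0)`, with `A, B` continuous and
`A(0) > 0`, converges to `0` as `y → 0-`. -/
theorem stmt5 (ε : ℝ) (hε : 0 < ε) (A B : ℝ → ℝ)
    (hA : ContinuousOn A (Set.Icc (-ε) 0)) (hB : ContinuousOn B (Set.Icc (-ε) 0))
    (hA0 : 0 < A 0) (h : ℝ → ℝ)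
    (hode : ∀ y ∈ Set.Ico (-ε) 0, HasDerivAt h (-(h y) / (A y * y ^ 2) + B y) y) :
    Tendsto h (nhdsWithin 0 (Set.Iio 0)) (nhds 0) := by
  have hleft : 𝓝[<] (0 : ℝ) ≤ 𝓝[Icc (-ε) 0] 0 :=
    nhdsWithin_le_of_mem (Icc_mem_nhdsLT (neg_lt_zero.2 hε))
  have h0 : (0 : ℝ) ∈ Icc (-ε) 0 := ⟨neg_nonpos.2 hε.le, le_rfl⟩
  have hAlim := (hA 0 h0).mono_left hleft
  have hBlim := (hB 0 h0).mono_left hleft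
  have hAbound : ∀ᶠ y in 𝓝[<] 0, 0 < A y ∧ A y ≤ 2 * A 0 :=
    (hAlim.eventually (eventually_gt_nhds hA0)).and
      (hAlim.eventually (eventually_le_nhds (by linarith)))
  have hode' : ∀ᶠ y in 𝓝[<] 0, HasDerivAt h (-(h y) / (A y * y ^ 2) + B y) y := by
    filter_upwards [Ico_mem_nhdsLT (neg_lt_zero.2 hε)] with y hy using hode y hy
  refine (nhds_basis_Icc_pos 0).tendsto_right_iff.2 fun r hr => ?_
  have hupper := eventually_le_of_hasDerivAt_neg_div_mul_sq_add (by positivity) hr hAbound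
    (hBlim.eventually (eventually_le_nhds (lt_add_one (B 0)))) hode'
  have hlower := eventually_le_of_hasDerivAt_neg_div_mul_sq_add (h := fun y => -h y)
    (by positivity) hr hAbound (hBlim.neg.eventually (eventually_le_nhds (lt_add_one (-B 0))))
    (hode'.mono fun y hy => hy.neg.congr_deriv (by ring))
  filter_upwards [hupper, hlower] with y hup hlow
  constructor <;> linarith
end

section
/- Let 0 < p < 1, δ > 0, σ > 0, μ > 0, with G ≤ μ < A where G = sqrt(2δ(1-p)σ²/p) and A = δ/p+(1-p)σ²/2. Define a(k) = 2pδ(1+k), b(k) = (2δ + p(1-p)(2μ-σ²))k + 2p(1-p)μ, c(k) = (1-p)(2μ+(p²-1)σ²)k + (1-p)³σ². Then K = (1-p)(μ-G)/((A-μ)+p(μ-G)) is the smallest nonnegative solution of b(k)² = 4 a(k) c(k). -/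
/-!
With `D = (A - μ) + p (μ - G)`, `N = (1 - p)(μ - G)` and `D', N'` the same expressions with `G`
replaced by `-G`, the relations `p G² = 2δ(1-p)σ²` and `2pA = 2δ + p(1-p)σ²` make the discriminant
factor as `b² - 4ac = 4p² (D k - N)(D' k - N')`. Both factors are increasing lines, so the roots are
`N / D = K` and `N' / D'`, and `N' D - N D' = 2(1-p) G (A - μ) ≥ 0` shows that `K` is the smaller one.
-/

theorem isLeast_nonneg_root_of_sub_eq_mul {f g : ℝ → ℝ} {C D N D' N' : ℝ}
    (hfg : ∀ k, f k - g k = C * (D * k - N) * (D' * k - N')) (hC : C ≠ 0)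
    (hD : 0 < D) (hD' : 0 < D') (hN : 0 ≤ N) (hle : N * D' ≤ N' * D) :
    IsLeast {k | 0 ≤ k ∧ f k = g k} (N / D) := by
  refine ⟨⟨div_nonneg hN hD.le, ?_⟩, ?_⟩
  · rw [← sub_eq_zero, hfg, mul_div_cancel₀ N hD.ne', sub_self, mul_zero, zero_mul]
  · rintro k ⟨-, hroot⟩
    rw [← sub_eq_zero, hfg] at hroot
    simp only [mul_eq_zero, hC, sub_eq_zero, false_or] at hroot
    rcases hroot with hk | hk
    · rw [← hk, mul_div_cancel_left₀ k hD.ne']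
    · rw [← mul_div_cancel_left₀ k hD'.ne', hk, div_le_div_iff₀ hD hD']
      exact hle

theorem discriminant_eq_mul {p δ σ μ G A : ℝ} (hG : p * G ^ 2 = 2 * δ * (1 - p) * σ ^ 2)
    (hA : 2 * p * A = 2 * δ + p * (1 - p) * σ ^ 2) (k : ℝ) :
    ((2 * δ + p * (1 - p) * (2 * μ - σ ^ 2)) * k + 2 * p * (1 - p) * μ) ^ 2
        - 4 * (2 * p * δ * (1 + k))
          * ((1 - p) * (2 * μ + (p ^ 2 - 1) * σ ^ 2) * k + (1 - p) ^ 3 * σ ^ 2)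
      = 4 * p ^ 2 * ((A - μ + p * (μ - G)) * k - (1 - p) * (μ - G))
          * ((A - μ + p * (μ + G)) * k - (1 - p) * (μ + G)) := by
  linear_combination (4 * p * (1 - p - p * k) ^ 2) * hG -
    (2 * δ * k ^ 2 + 2 * p * k ^ 2 * A - 4 * p * μ * k - 4 * p * μ * k ^ 2
      + p * σ ^ 2 * k ^ 2 + 4 * p ^ 2 * μ * k + 4 * p ^ 2 * μ * k ^ 2
      - p ^ 2 * σ ^ 2 * k ^ 2) * hA

theorem stmt8_general (p δ σ μ G A K : ℝ) (a b c : ℝ → ℝ)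
    (hp : 0 < p) (hp1 : p < 1) (hδ : 0 < δ)
    (hG : G = Real.sqrt (2 * δ * (1 - p) * σ ^ 2 / p))
    (hA : A = δ / p + (1 - p) * σ ^ 2 / 2)
    (hGμ : G ≤ μ) (hμA : μ < A)
    (ha : ∀ k, a k = 2 * p * δ * (1 + k))
    (hb : ∀ k, b k = (2 * δ + p * (1 - p) * (2 * μ - σ ^ 2)) * k + 2 * p * (1 - p) * μ)
    (hc : ∀ k, c k = (1 - p) * (2 * μ + (p ^ 2 - 1) * σ ^ 2) * k + (1 - p) ^ 3 * σ ^ 2)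
    (hK : K = (1 - p) * (μ - G) / ((A - μ) + p * (μ - G))) :
    0 ≤ K ∧ (b K) ^ 2 = 4 * a K * c K ∧
      ∀ k : ℝ, 0 ≤ k → (b k) ^ 2 = 4 * a k * c k → K ≤ k := by
  have hq : 0 < 1 - p := sub_pos.2 hp1
  have hG0 : 0 ≤ G := hG ▸ Real.sqrt_nonneg _
  have hpG : p * G ^ 2 = 2 * δ * (1 - p) * σ ^ 2 := by
    rw [hG, Real.sq_sqrt (by positivity)]
    field_simp
  have hpA : 2 * p * A = 2 * δ + p * (1 - p) * σ ^ 2 := by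
    rw [hA]; field_simp
  have hAμ : 0 < A - μ := sub_pos.2 hμA
  have hdisc (k : ℝ) : b k ^ 2 - 4 * a k * c k
      = 4 * p ^ 2 * ((A - μ + p * (μ - G)) * k - (1 - p) * (μ - G))
          * ((A - μ + p * (μ + G)) * k - (1 - p) * (μ + G)) := by
    rw [ha, hb, hc]; exact discriminant_eq_mul hpG hpA k
  have hleast : IsLeast {k | 0 ≤ k ∧ b k ^ 2 = 4 * a k * c k} K := by
    rw [hK]
    refine isLeast_nonneg_root_of_sub_eq_mul hdisc (by positivity) (by positivity)
      (add_pos_of_pos_of_nonneg hAμ (mul_nonneg hp.le (by linarith))) (by positivity) ?_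
    have hgap : (1 - p) * (μ + G) * (A - μ + p * (μ - G))
        - (1 - p) * (μ - G) * (A - μ + p * (μ + G)) = 2 * (1 - p) * G * (A - μ) := by ring
    linarith [mul_nonneg (mul_nonneg (mul_nonneg zero_le_two hq.le) hG0) hAμ.le]
  exact ⟨hleast.1.1, hleast.1.2, fun k hk hroot => hleast.2 ⟨hk, hroot⟩⟩

/-- `K = (1-p)(μ-G)/((A-μ)+p(μ-G))` is the smallest nonnegative solution `k` of
`b(k)² = 4 a(k) c(k)` where `a(k) = 2pδ(1+k)`, `b(k) = (2δ + p(1-p)(2μ-σ²))k + 2p(1-p)μ`,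
`c(k) = (1-p)(2μ+(p²-1)σ²)k + (1-p)³σ²`, for `0 < p < 1` and `G ≤ μ < A`. -/
theorem stmt8 (p δ σ μ G A K : ℝ) (a b c : ℝ → ℝ)
    (hp : 0 < p) (hp1 : p < 1) (hδ : 0 < δ) (hσ : 0 < σ) (hμ : 0 < μ)
    (hG : G = Real.sqrt (2 * δ * (1 - p) * σ ^ 2 / p))
    (hA : A = δ / p + (1 - p) * σ ^ 2 / 2)
    (hGμ : G ≤ μ) (hμA : μ < A)
    (ha : ∀ k, a k = 2 * p * δ * (1 + k))
    (hb : ∀ k, b k = (2 * δ + p * (1 - p) * (2 * μ - σ ^ 2)) * k + 2 * p * (1 - p) * μ)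
    (hc : ∀ k, c k = (1 - p) * (2 * μ + (p ^ 2 - 1) * σ ^ 2) * k + (1 - p) ^ 3 * σ ^ 2)
    (hK : K = (1 - p) * (μ - G) / ((A - μ) + p * (μ - G))) :
    0 ≤ K ∧ (b K) ^ 2 = 4 * a K * c K ∧
      ∀ k : ℝ, 0 ≤ k → (b k) ^ 2 = 4 * a k * c k → K ≤ k :=
  stmt8_general p δ σ μ G A K a b c hp hp1 hδ hG hA hGμ hμA ha hb hc hK
end

section
/- In the frictional market model, for any consistent price process S̃ (an Itô process with (1-λ̲)S_t ≤ S̃_t ≤ (1+λ̄)S_t for all t a.s.), every consumption process financeable with transaction costs is financeable in the frictionless market with price S̃; that is, 𝒞 ⊆ 𝒞(S̃). -/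
open MeasureTheory

/-!
Keep the frictional trading strategy `φ = η_S + φ↑ - φ↓` and only change the cash account, so
that all trades are settled at `S̃` instead of at the bid or ask. Since `S̃` lies below the ask
price, every purchase becomes cheaper, and since it lies above the bid price, every sale earns
more; hence the new cash account dominates the old one. Likewise, a position valued at `S̃` is
worth at least its liquidation value. So the frictionless wealth dominates the liquidation value,
which is nonnegative by admissibility.
-/

theorem setIntegral_mono_of_isCompact {X : Type*} [TopologicalSpace X] [T2Space X]
    [MeasurableSpace X] [OpensMeasurableSpace X] {μ : Measure X} [IsFiniteMeasureOnCompacts μ]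
    {K : Set X} (hK : IsCompact K) {f g : X → ℝ} (hf : ContinuousOn f K) (hg : ContinuousOn g K)
    (hfg : ∀ x ∈ K, f x ≤ g x) :
    ∫ x in K, f x ∂μ ≤ ∫ x in K, g x ∂μ :=
  setIntegral_mono_on (hf.integrableOn_compact hK) (hg.integrableOn_compact hK)
    hK.measurableSet hfg

theorem max_mul_sub_max_neg_mul_le_mul {α : Type*} [Ring α] [LinearOrder α]
    [IsStrictOrderedRing α] (x : α) {a p b : α} (hap : a ≤ p) (hpb : p ≤ b) :
    max x 0 * a - max (-x) 0 * b ≤ x * p := by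
  rcases le_total 0 x with hx | hx
  · rw [max_eq_left hx, max_eq_right (neg_nonpos.mpr hx), zero_mul, sub_zero]
    exact mul_le_mul_of_nonneg_left hap hx
  · rw [max_eq_right hx, max_eq_left (neg_nonneg.mpr hx), zero_mul, neg_mul, sub_neg_eq_add,
      zero_add]
    exact mul_le_mul_of_nonpos_left hpb hx

theorem stmt13_general {Ω : Type*}
    (S Stilde : ℝ → Ω → ℝ) (lamBid lamAsk : ℝ)
    (hScont : ∀ ω, Continuous fun t => S t ω)
    (hStildecont : ∀ ω, Continuous fun t => Stilde t ω)
    (hsandwich : ∀ t ω,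
      (1 - lamBid) * S t ω ≤ Stilde t ω ∧ Stilde t ω ≤ (1 + lamAsk) * S t ω)
    (ηB ηS : ℝ) (c : ℝ → Ω → ℝ)
    -- `c` is financeable in the market with transaction costs:
    (hfrictional : ∃ (φ0 : ℝ → Ω → ℝ) (φup φdown : Ω → StieltjesFunction ℝ),
      (∀ ω, ∀ x < (0:ℝ), φup ω x = 0 ∧ φdown ω x = 0) ∧
      -- self-financing: buy at the ask `(1+λ̄)S`, sell at the bid `(1-λ̲)S`
      (∀ ω, ∀ t, 0 ≤ t → φ0 t ω = ηB
        - (∫ u in Set.Icc 0 t, (1 + lamAsk) * S u ω ∂((φup ω).measure))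
        + (∫ u in Set.Icc 0 t, (1 - lamBid) * S u ω ∂((φdown ω).measure))
        - ∫ u in (0:ℝ)..t, c u ω) ∧
      -- admissibility: nonnegative liquidation value
      (∀ ω, ∀ t, 0 ≤ t →
        0 ≤ φ0 t ω
          + max (ηS + φup ω t - φdown ω t) 0 * ((1 - lamBid) * S t ω)
          - max (-(ηS + φup ω t - φdown ω t)) 0 * ((1 + lamAsk) * S t ω))) :
    -- then `c` is financeable in the frictionless market with price `S̃`:
    ∃ (φ0 : ℝ → Ω → ℝ) (φup φdown : Ω → StieltjesFunction ℝ),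
      (∀ ω, ∀ x < (0:ℝ), φup ω x = 0 ∧ φdown ω x = 0) ∧
      -- frictionless self-financing: all trades at the price `S̃`
      (∀ ω, ∀ t, 0 ≤ t → φ0 t ω = ηB
        - (∫ u in Set.Icc 0 t, Stilde u ω ∂((φup ω).measure))
        + (∫ u in Set.Icc 0 t, Stilde u ω ∂((φdown ω).measure))
        - ∫ u in (0:ℝ)..t, c u ω) ∧
      -- frictionless admissibility: nonnegative wealth `V_t = φ⁰_t + φ_t S̃_t`
      (∀ ω, ∀ t, 0 ≤ t →
        0 ≤ φ0 t ω + (ηS + φup ω t - φdown ω t) * Stilde t ω) := by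
  obtain ⟨φ0, φup, φdown, hvanish, hself, hadm⟩ := hfrictional
  refine ⟨fun t ω => ηB
      - (∫ u in Set.Icc 0 t, Stilde u ω ∂((φup ω).measure))
      + (∫ u in Set.Icc 0 t, Stilde u ω ∂((φdown ω).measure))
      - ∫ u in (0:ℝ)..t, c u ω, φup, φdown, hvanish, fun _ _ _ => rfl, fun ω t ht => ?_⟩
  have hask : Continuous fun u => (1 + lamAsk) * S u ω := (hScont ω).const_mul _
  have hbid : Continuous fun u => (1 - lamBid) * S u ω := (hScont ω).const_mul _
  have hbuy : ∫ u in Set.Icc 0 t, Stilde u ω ∂((φup ω).measure)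
      ≤ ∫ u in Set.Icc 0 t, (1 + lamAsk) * S u ω ∂((φup ω).measure) :=
    setIntegral_mono_of_isCompact isCompact_Icc (hStildecont ω).continuousOn hask.continuousOn
      fun u _ => (hsandwich u ω).2
  have hsell : ∫ u in Set.Icc 0 t, (1 - lamBid) * S u ω ∂((φdown ω).measure)
      ≤ ∫ u in Set.Icc 0 t, Stilde u ω ∂((φdown ω).measure) :=
    setIntegral_mono_of_isCompact isCompact_Icc hbid.continuousOn (hStildecont ω).continuousOn
      fun u _ => (hsandwich u ω).1
  have hposition := max_mul_sub_max_neg_mul_le_mul (ηS + φup ω t - φdown ω t)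
    (hsandwich t ω).1 (hsandwich t ω).2
  have hliquidation := hadm ω t ht
  rw [hself ω t ht] at hliquidation
  dsimp only
  linarith

/-- Proposition 2.1: every consumption process financeable under proportional transaction costs
(bid `(1-λ̲)S`, ask `(1+λ̄)S`) is financeable in the frictionless market whose price is any
consistent price process `S̃` with `(1-λ̲)S ≤ S̃ ≤ (1+λ̄)S`.  Trading strategies are encoded by
their (pathwise) Hahn–Jordan decomposition `φ = η_S + φ↑ - φ↓`, where `φ↑, φ↓` are
right-continuous nondecreasing (Stieltjes) functions vanishing before time `0`; the
self-financing condition is the Stieltjes-integral identity of the paper, and admissibility is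
nonnegativity of the liquidation value (resp. of the frictionless wealth `φ⁰ + φ S̃`). -/
theorem stmt13 {Ω : Type*} [MeasurableSpace Ω] (P : Measure Ω) [IsProbabilityMeasure P]
    (S Stilde : ℝ → Ω → ℝ) (lamBid lamAsk : ℝ)
    (hlamBid : lamBid ∈ Set.Ioo (0:ℝ) 1) (hlamAsk : 0 < lamAsk)
    (hScont : ∀ ω, Continuous fun t => S t ω) (hSpos : ∀ t ω, 0 < S t ω)
    (hStildecont : ∀ ω, Continuous fun t => Stilde t ω)
    (hsandwich : ∀ t ω,
      (1 - lamBid) * S t ω ≤ Stilde t ω ∧ Stilde t ω ≤ (1 + lamAsk) * S t ω)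
    (ηB ηS : ℝ) (c : ℝ → Ω → ℝ) (hc : ∀ t ω, 0 ≤ c t ω)
    -- `c` is financeable in the market with transaction costs:
    (hfrictional : ∃ (φ0 : ℝ → Ω → ℝ) (φup φdown : Ω → StieltjesFunction ℝ),
      (∀ ω, ∀ x < (0:ℝ), φup ω x = 0 ∧ φdown ω x = 0) ∧
      -- self-financing: buy at the ask `(1+λ̄)S`, sell at the bid `(1-λ̲)S`
      (∀ ω, ∀ t, 0 ≤ t → φ0 t ω = ηB
        - (∫ u in Set.Icc 0 t, (1 + lamAsk) * S u ω ∂((φup ω).measure))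
        + (∫ u in Set.Icc 0 t, (1 - lamBid) * S u ω ∂((φdown ω).measure))
        - ∫ u in (0:ℝ)..t, c u ω) ∧
      -- admissibility: nonnegative liquidation value
      (∀ ω, ∀ t, 0 ≤ t →
        0 ≤ φ0 t ω
          + max (ηS + φup ω t - φdown ω t) 0 * ((1 - lamBid) * S t ω)
          - max (-(ηS + φup ω t - φdown ω t)) 0 * ((1 + lamAsk) * S t ω))) :
    -- then `c` is financeable in the frictionless market with price `S̃`:
    ∃ (φ0 : ℝ → Ω → ℝ) (φup φdown : Ω → StieltjesFunction ℝ),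
      (∀ ω, ∀ x < (0:ℝ), φup ω x = 0 ∧ φdown ω x = 0) ∧
      -- frictionless self-financing: all trades at the price `S̃`
      (∀ ω, ∀ t, 0 ≤ t → φ0 t ω = ηB
        - (∫ u in Set.Icc 0 t, Stilde u ω ∂((φup ω).measure))
        + (∫ u in Set.Icc 0 t, Stilde u ω ∂((φdown ω).measure))
        - ∫ u in (0:ℝ)..t, c u ω) ∧
      -- frictionless admissibility: nonnegative wealth `V_t = φ⁰_t + φ_t S̃_t`
      (∀ ω, ∀ t, 0 ≤ t →
        0 ≤ φ0 t ω + (ηS + φup ω t - φdown ω t) * Stilde t ω) :=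
  stmt13_general S Stilde lamBid lamAsk hScont hStildecont hsandwich ηB ηS c hfrictional
end

section
/- Let p ∈ (0,1), δ,σ,μ>0 with μ < G = sqrt(2δ(1-p)σ²/p). Define the curve T(x,z): P(x,z)=0 with P(x,z) = -2qδz² + 2p(μx+1)z - (1-p)²σ²x², q = p/(1-p), restricted to x>0. Then the set {x > 0 : ∃z, P(x,z) = 0 and z ≥ (1-p)/(2δ)} is bounded with supremum x_E = 1/(G-μ), and the maximal value of z over the curve is attained at x_N = 2μ/(G² - μ²). -/
/-!
Rescaling `z = c w` with `c = (1-p)/(2δ)` and using `p G² = 2δ(1-p)σ²` turns `P = 0` into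
`w² - 2(μx+1)w + G²x² = 0`. Read as a quadratic in `w`, its discriminant `(μx+1)² - G²x²` must be
nonnegative, which gives `x ≤ 1/(G-μ)`, with equality at the double root `w = G/(G-μ) ≥ 1`.
Read as a quadratic in `x`, its discriminant `w(2G² - (G²-μ²)w)` must be nonnegative, which gives
`w ≤ 2G²/(G²-μ²)`, attained at `x = 2μ/(G²-μ²)`.
-/

def ellipseForm (μ G x w : ℝ) : ℝ := w ^ 2 - 2 * (μ * x + 1) * w + G ^ 2 * x ^ 2

section ellipseForm

variable {μ G x w : ℝ}

lemma le_one_div_sub_of_ellipseForm_eq_zero (hμ : 0 ≤ μ) (hμG : μ < G) (hx : 0 < x)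
    (h : ellipseForm μ G x w = 0) : x ≤ 1 / (G - μ) := by
  have hsq : (w - (μ * x + 1)) ^ 2 = (μ * x + 1) ^ 2 - (G * x) ^ 2 := by
    unfold ellipseForm at h; linear_combination h
  have hGx : G * x ≤ μ * x + 1 :=
    (pow_le_pow_iff_left₀ (by nlinarith) (by positivity) two_ne_zero).mp
      (by nlinarith [sq_nonneg (w - (μ * x + 1))])
  rw [le_div_iff₀ (by linarith)]
  linarith

lemma ellipseForm_east (hμG : μ ≠ G) :
    ellipseForm μ G (1 / (G - μ)) (G / (G - μ)) = 0 := by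
  have : G - μ ≠ 0 := sub_ne_zero.mpr hμG.symm
  unfold ellipseForm
  field_simp
  ring

lemma ellipseForm_north (hμG : μ ^ 2 ≠ G ^ 2) :
    ellipseForm μ G (2 * μ / (G ^ 2 - μ ^ 2)) (2 * G ^ 2 / (G ^ 2 - μ ^ 2)) = 0 := by
  have : G ^ 2 - μ ^ 2 ≠ 0 := sub_ne_zero.mpr hμG.symm
  unfold ellipseForm
  field_simp
  ring

lemma le_of_ellipseForm_eq_zero (hμG : μ ^ 2 < G ^ 2) (h : ellipseForm μ G x w = 0) :
    w ≤ 2 * G ^ 2 / (G ^ 2 - μ ^ 2) := by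
  have hG : 0 < G ^ 2 := by nlinarith
  have hdisc : w * ((G ^ 2 - μ ^ 2) * w - 2 * G ^ 2) ≤ 0 := by
    have hsq : G ^ 2 * ellipseForm μ G x w
        = (G ^ 2 * x - μ * w) ^ 2 + w * ((G ^ 2 - μ ^ 2) * w - 2 * G ^ 2) := by
      unfold ellipseForm; ring
    nlinarith [sq_nonneg (G ^ 2 * x - μ * w)]
  rw [le_div_iff₀ (by linarith)]
  rcases le_or_gt w 0 with hw | hw
  · nlinarith
  · nlinarith

end ellipseForm

lemma eq_neg_mul_ellipseForm {p δ σ μ G : ℝ} (hp : 0 < p) (hp1 : p < 1) (hδ : 0 < δ)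
    (hG : G = Real.sqrt (2 * δ * (1 - p) * σ ^ 2 / p)) (x z : ℝ) :
    -2 * (p / (1 - p)) * δ * z ^ 2 + 2 * p * (μ * x + 1) * z - (1 - p) ^ 2 * σ ^ 2 * x ^ 2
      = -(p * ((1 - p) / (2 * δ))) * ellipseForm μ G x (z / ((1 - p) / (2 * δ))) := by
  have h1p : 1 - p ≠ 0 := by linarith
  have hG2 : G ^ 2 = 2 * δ * (1 - p) * σ ^ 2 / p := by
    rw [hG, Real.sq_sqrt (by have := sub_pos.mpr hp1; positivity)]
  unfold ellipseForm
  rw [hG2]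
  field_simp
  ring

theorem stmt16_general (p δ σ μ q G : ℝ) (Pf : ℝ → ℝ → ℝ)
    (hp : 0 < p) (hp1 : p < 1) (hδ : 0 < δ) (hμ : 0 < μ)
    (hq : q = p / (1 - p)) (hG : G = Real.sqrt (2 * δ * (1 - p) * σ ^ 2 / p))
    (hμG : μ < G)
    (hPf : ∀ x z, Pf x z = -2 * q * δ * z ^ 2 + 2 * p * (μ * x + 1) * z
      - (1 - p) ^ 2 * σ ^ 2 * x ^ 2) :
    BddAbove {x : ℝ | 0 < x ∧ ∃ z, Pf x z = 0 ∧ (1 - p) / (2 * δ) ≤ z} ∧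
    sSup {x : ℝ | 0 < x ∧ ∃ z, Pf x z = 0 ∧ (1 - p) / (2 * δ) ≤ z} = 1 / (G - μ) ∧
    ∃ zN, Pf (2 * μ / (G ^ 2 - μ ^ 2)) zN = 0 ∧
      ∀ x z, 0 < x → Pf x z = 0 → z ≤ zN := by
  set c := (1 - p) / (2 * δ) with hc_def
  have hc : 0 < c := div_pos (by linarith) (by linarith)
  have hGμ : 0 < G - μ := by linarith
  have hμG2 : μ ^ 2 < G ^ 2 := by nlinarith
  have hP : ∀ x z, Pf x z = 0 ↔ ellipseForm μ G x (z / c) = 0 := fun x z ↦ by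
    rw [hPf, hq, eq_neg_mul_ellipseForm hp hp1 hδ hG, ← hc_def, mul_eq_zero,
      or_iff_right (neg_ne_zero.mpr (mul_pos hp hc).ne')]
  have hE : IsGreatest {x : ℝ | 0 < x ∧ ∃ z, Pf x z = 0 ∧ c ≤ z} (1 / (G - μ)) := by
    refine ⟨⟨by positivity, c * (G / (G - μ)), ?_, ?_⟩, ?_⟩
    · rw [hP, mul_div_cancel_left₀ _ hc.ne']
      exact ellipseForm_east hμG.ne
    · exact le_mul_of_one_le_right hc.le ((one_le_div hGμ).mpr (by linarith))
    · rintro x ⟨hx, z, hz, -⟩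
      exact le_one_div_sub_of_ellipseForm_eq_zero hμ.le hμG hx ((hP x z).mp hz)
  refine ⟨hE.bddAbove, hE.csSup_eq, c * (2 * G ^ 2 / (G ^ 2 - μ ^ 2)), ?_, ?_⟩
  · rw [hP, mul_div_cancel_left₀ _ hc.ne']
    exact ellipseForm_north hμG2.ne
  · intro x z _ hz
    have := le_of_ellipseForm_eq_zero hμG2 ((hP x z).mp hz)
    rwa [div_le_iff₀' hc] at this

/-- For `0 < p < 1` and `μ < G`, the upper half of the curve `𝕋 = {P = 0}` (an ellipse) has a
bounded set of abscissas with supremum `x_E = 1/(G-μ)`, and the maximal `z`-value over the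
curve is attained at the north pole abscissa `x_N = 2μ/(G² - μ²)`. -/
theorem stmt16 (p δ σ μ q G : ℝ) (Pf : ℝ → ℝ → ℝ)
    (hp : 0 < p) (hp1 : p < 1) (hδ : 0 < δ) (hσ : 0 < σ) (hμ : 0 < μ)
    (hq : q = p / (1 - p)) (hG : G = Real.sqrt (2 * δ * (1 - p) * σ ^ 2 / p))
    (hμG : μ < G)
    (hPf : ∀ x z, Pf x z = -2 * q * δ * z ^ 2 + 2 * p * (μ * x + 1) * z
      - (1 - p) ^ 2 * σ ^ 2 * x ^ 2) :
    BddAbove {x : ℝ | 0 < x ∧ ∃ z, Pf x z = 0 ∧ (1 - p) / (2 * δ) ≤ z} ∧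
    sSup {x : ℝ | 0 < x ∧ ∃ z, Pf x z = 0 ∧ (1 - p) / (2 * δ) ≤ z} = 1 / (G - μ) ∧
    ∃ zN, Pf (2 * μ / (G ^ 2 - μ ^ 2)) zN = 0 ∧
      ∀ x z, 0 < x → Pf x z = 0 → z ≤ zN :=
  stmt16_general p δ σ μ q G Pf hp hp1 hδ hμ hq hG hμG hPf
end
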